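/- For every a ∈ ℝ³ and all indices i, j, k ∈ {1,2,3}, the function g(v) = φ_i(v) φ_j(v) φ_k(v) √(μ_a(v)) satisfies P_a g(v) = Σ_{ℓ=1}^3 (δ_{ij} δ_{kℓ} + δ_{ik} δ_{jℓ} + δ_{jk} δ_{iℓ}) · φ_ℓ(v) √(μ_a(v)) for all v ∈ ℝ³, where δ is the Kronecker delta. -/

import Mathlib

open MeasureTheory
open scoped ENNReal

/-- `ℝ³` with the Euclidean norm. -/
abbrev E3 : Type := EuclideanSpace ℝ (Fin 3)

/-- The Maxwellian `μ_a(v) = (2π)^{-3/2} exp(-|v-a|²/2)`. -/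
noncomputable def maxw (a v : E3) : ℝ :=
  (2 * Real.pi) ^ (-(3:ℝ)/2) * Real.exp (-‖v - a‖ ^ 2 / 2)

/-- The five collision invariants `φ₀ = 1`, `φ_j = v_j - a_j` (`j = 1,2,3`),
`φ₄ = (|v-a|² - 3)/√6`. -/
noncomputable def phiB (a : E3) : Fin 5 → E3 → ℝ :=
  ![fun _ => 1,
    fun v => v 0 - a 0,
    fun v => v 1 - a 1,
    fun v => v 2 - a 2,
    fun v => (‖v - a‖ ^ 2 - 3) / Real.sqrt 6]

/-- The hydrodynamic projection
`P_a f(v) = Σ_{j=0}^4 (∫ f(w) φ_j(w) √μ_a(w) dw) φ_j(v) √μ_a(v)`. -/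
noncomputable def Pproj (a : E3) (f : E3 → ℝ) (v : E3) : ℝ :=
  ∑ j : Fin 5,
    (∫ w, f w * phiB a j w * Real.sqrt (maxw a w)) * (phiB a j v * Real.sqrt (maxw a v))

/-!
Under `μ_a` the centred coordinates `v_c - a_c` are independent standard Gaussians, so `μ_a` is
a product of one-dimensional Gaussian densities and moments of `μ_a` factor into one-dimensional
moments `m_n`, with `m_0 = 1`, `m_{n+2} = (n+1) m_n` (integration by parts) and `m_n = 0` for odd
`n`. The coefficients of `P_a g` along `φ₀` and `φ₄` are integrals of functions that are odd about
`a`, hence vanish; the coefficient along `φ_ℓ` is the fourth moment `E[X_i X_j X_k X_ℓ]`, which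
by `m_2 = 1`, `m_4 = 3` is the sum over the three pairings of `{i, j, k, ℓ}` (Isserlis).
-/

open ProbabilityTheory Real

lemma Function.Odd.integral_eq_zero {G E : Type*} [AddGroup G] [MeasurableSpace G]
    [MeasurableNeg G] {μ : Measure G} [μ.IsNegInvariant] [NormedAddCommGroup E]
    [NormedSpace ℝ E] {f : G → E} (hf : Function.Odd f) : ∫ x, f x ∂μ = 0 := by
  have h := integral_neg_eq_self f μ
  simp_rw [show ∀ x, f (-x) = -f x from hf, integral_neg] at h
  have : IsAddTorsionFree E := .of_isTorsionFree ℝ E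
  exact neg_eq_self.mp h

noncomputable def stdGaussianMoment (n : ℕ) : ℝ := ∫ x, x ^ n * gaussianPDFReal 0 1 x

lemma gaussianPDFReal_zero_one :
    gaussianPDFReal 0 1 = fun x ↦ (√(2 * π))⁻¹ * exp (-(1 / 2) * x ^ 2) := by
  ext x
  simp only [gaussianPDFReal, NNReal.coe_one, mul_one, sub_zero]
  ring_nf

lemma integrable_pow_mul_gaussianPDFReal (n : ℕ) :
    Integrable fun x ↦ x ^ n * gaussianPDFReal 0 1 x := by
  have h := (integrable_rpow_mul_exp_neg_mul_sq (b := 1 / 2) (by norm_num)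
    (s := n) (neg_one_lt_zero.trans_le n.cast_nonneg)).const_mul (√(2 * π))⁻¹
  refine h.congr (.of_forall fun x ↦ ?_)
  simp only [rpow_natCast, gaussianPDFReal_zero_one]
  ring

lemma hasDerivAt_gaussianPDFReal (x : ℝ) :
    HasDerivAt (gaussianPDFReal 0 1) (-x * gaussianPDFReal 0 1 x) x := by
  have h : HasDerivAt (fun t : ℝ ↦ -(1 / 2) * t ^ 2) (-x) x := by
    simpa using ((hasDerivAt_pow 2 x).const_mul (-(1 / 2 : ℝ)))
  rw [gaussianPDFReal_zero_one]
  exact (h.exp.const_mul _).congr_deriv (by ring)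

lemma stdGaussianMoment_zero : stdGaussianMoment 0 = 1 := by
  simp [stdGaussianMoment, integral_gaussianPDFReal_eq_one]

lemma stdGaussianMoment_add_two (n : ℕ) :
    stdGaussianMoment (n + 2) = (n + 1) * stdGaussianMoment n := by
  have hderiv (x : ℝ) : HasDerivAt (fun t ↦ t ^ (n + 1) * gaussianPDFReal 0 1 t)
      ((n + 1) * (x ^ n * gaussianPDFReal 0 1 x) - x ^ (n + 2) * gaussianPDFReal 0 1 x) x := by
    refine ((hasDerivAt_pow (n + 1) x).mul (hasDerivAt_gaussianPDFReal x)).congr_deriv ?_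
    push_cast
    ring
  have hint := integral_eq_zero_of_hasDerivAt_of_integrable hderiv
    (((integrable_pow_mul_gaussianPDFReal n).const_mul _).sub
      (integrable_pow_mul_gaussianPDFReal (n + 2)))
    (integrable_pow_mul_gaussianPDFReal (n + 1))
  rw [integral_sub ((integrable_pow_mul_gaussianPDFReal n).const_mul _)
    (integrable_pow_mul_gaussianPDFReal (n + 2)), integral_const_mul, sub_eq_zero] at hint
  exact hint.symm

lemma stdGaussianMoment_two : stdGaussianMoment 2 = 1 := by
  simpa [stdGaussianMoment_zero] using stdGaussianMoment_add_two 0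

lemma stdGaussianMoment_four : stdGaussianMoment 4 = 3 := by
  rw [stdGaussianMoment_add_two 2, stdGaussianMoment_two]
  norm_num

lemma stdGaussianMoment_of_odd {n : ℕ} (hn : Odd n) : stdGaussianMoment n = 0 :=
  Function.Odd.integral_eq_zero fun x ↦ by simp [gaussianPDFReal_zero_one, hn.neg_pow]

lemma integral_sub_pow_mul_gaussianPDFReal (m : ℝ) (n : ℕ) :
    ∫ x, (x - m) ^ n * gaussianPDFReal m 1 x = stdGaussianMoment n := by
  simpa [stdGaussianMoment, gaussianPDFReal_sub] using
    integral_sub_right_eq_self (fun x ↦ x ^ n * gaussianPDFReal 0 1 x) m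

lemma EuclideanSpace.integral_fintype_prod_eq_prod {ι : Type*} [Fintype ι]
    (f : ι → ℝ → ℝ) : ∫ w : EuclideanSpace ℝ ι, ∏ c, f c (w c) = ∏ c, ∫ t, f c t := by
  rw [← MeasureTheory.integral_fintype_prod_eq_prod, ← volume_pi,
    ← (EuclideanSpace.volume_preserving_symm_measurableEquiv_toLp ι).integral_comp
      (MeasurableEquiv.toLp 2 (ι → ℝ)).symm.measurableEmbedding]
  rfl

lemma maxw_eq_prod_gaussianPDFReal (a w : E3) :
    maxw a w = ∏ c, gaussianPDFReal (a c) 1 (w c) := by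
  simp only [maxw, gaussianPDFReal, NNReal.coe_one, mul_one, Finset.prod_mul_distrib,
    Finset.prod_const, Finset.card_univ, Fintype.card_fin, ← exp_sum]
  congr 1
  · rw [sqrt_eq_rpow, ← rpow_neg (by positivity), ← rpow_natCast, ← rpow_mul (by positivity)]
    norm_num
  · rw [EuclideanSpace.real_norm_sq_eq, ← Finset.sum_div, ← Finset.sum_neg_distrib]
    rfl

lemma integral_prod_sub_pow_mul_maxw (a : E3) (p : Fin 3 → ℕ) :
    ∫ w, (∏ c, (w c - a c) ^ p c) * maxw a w = ∏ c, stdGaussianMoment (p c) := by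
  simp_rw [maxw_eq_prod_gaussianPDFReal, ← Finset.prod_mul_distrib]
  rw [EuclideanSpace.integral_fintype_prod_eq_prod
    (fun c t ↦ (t - a c) ^ p c * gaussianPDFReal (a c) 1 t)]
  simp_rw [integral_sub_pow_mul_gaussianPDFReal]

def isserlisCoeff {ι : Type*} [DecidableEq ι] (i j k l : ι) : ℝ :=
  (if i = j then 1 else 0) * (if k = l then 1 else 0)
    + (if i = k then 1 else 0) * (if j = l then 1 else 0)
    + (if j = k then 1 else 0) * (if i = l then 1 else 0)

lemma integral_fourth_moment_maxw (a : E3) (i j k l : Fin 3) :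
    ∫ w, (w i - a i) * (w j - a j) * (w k - a k) * (w l - a l) * maxw a w
      = isserlisCoeff i j k l := by
  set p : Fin 3 → ℕ := fun c ↦ (if i = c then 1 else 0) + (if j = c then 1 else 0)
    + (if k = c then 1 else 0) + (if l = c then 1 else 0) with hp
  have hprod (w : E3) : (w i - a i) * (w j - a j) * (w k - a k) * (w l - a l)
      = ∏ c, (w c - a c) ^ p c := by
    simp only [hp, pow_add, Finset.prod_mul_distrib, pow_ite, pow_one, pow_zero,
      Finset.prod_ite_eq, Finset.mem_univ, if_true]
  simp_rw [hprod, integral_prod_sub_pow_mul_maxw, Fin.prod_univ_three, hp]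
  fin_cases i <;> fin_cases j <;> fin_cases k <;> fin_cases l <;>
    norm_num [Fin.ext_iff, isserlisCoeff, stdGaussianMoment_zero, stdGaussianMoment_two,
      stdGaussianMoment_four, stdGaussianMoment_of_odd]

lemma maxw_nonneg (a w : E3) : 0 ≤ maxw a w := by
  unfold maxw
  positivity

lemma maxw_sub_eq_maxw_add (a w : E3) : maxw a (a - w) = maxw a (a + w) := by
  simp [maxw]

lemma integral_cubic_mul_even_eq_zero (a : E3) (i j k : Fin 3) {ψ : E3 → ℝ}
    (hψ : ∀ w, ψ (a - w) = ψ (a + w)) :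
    ∫ w, (w i - a i) * (w j - a j) * (w k - a k) * √(maxw a w) * ψ w * √(maxw a w) = 0 := by
  rw [← integral_add_left_eq_self _ a]
  refine Function.Odd.integral_eq_zero fun w ↦ ?_
  simp only [← sub_eq_add_neg, hψ, maxw_sub_eq_maxw_add, PiLp.sub_apply, PiLp.add_apply]
  ring

lemma integral_cubic_mul_coord (a : E3) (i j k l : Fin 3) :
    ∫ w, (w i - a i) * (w j - a j) * (w k - a k) * √(maxw a w) * (w l - a l) * √(maxw a w)
      = isserlisCoeff i j k l := by
  rw [← integral_fourth_moment_maxw]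
  congr 1 with w
  linear_combination (w i - a i) * (w j - a j) * (w k - a k) * (w l - a l)
    * mul_self_sqrt (maxw_nonneg a w)

/-- `P_a(φ_i φ_j φ_k √μ_a)(v)
 = Σ_ℓ (δ_{ij}δ_{kℓ} + δ_{ik}δ_{jℓ} + δ_{jk}δ_{iℓ}) φ_ℓ(v) √μ_a(v)` for `i,j,k ∈ {1,2,3}`. -/
theorem stmt16 (a : E3) (i j k : Fin 3) (v : E3) :
    Pproj a (fun w => (w i - a i) * (w j - a j) * (w k - a k) * Real.sqrt (maxw a w)) v
      = ∑ ℓ : Fin 3,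
          ((if i = j then (1:ℝ) else 0) * (if k = ℓ then 1 else 0)
            + (if i = k then 1 else 0) * (if j = ℓ then 1 else 0)
            + (if j = k then 1 else 0) * (if i = ℓ then 1 else 0))
          * ((v ℓ - a ℓ) * Real.sqrt (maxw a v)) := by
  simp only [Pproj, Fin.sum_univ_five]
  rw [integral_cubic_mul_even_eq_zero a i j k (ψ := phiB a 0) fun _ ↦ rfl,
    integral_cubic_mul_even_eq_zero a i j k (ψ := phiB a 4) fun w ↦ by simp [phiB]]
  simp only [phiB, Matrix.cons_val_zero, Matrix.cons_val_one, Matrix.cons_val_two,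
    Matrix.cons_val_three, Matrix.head_cons, Matrix.tail_cons]
  rw [integral_cubic_mul_coord, integral_cubic_mul_coord, integral_cubic_mul_coord,
    Fin.sum_univ_three]
  simp only [isserlisCoeff]
  ring
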